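/- Let F be a field, m,n,s,t ∈ ℕ, A ∈ M(F,m,n), and let Q_{u,v,u',v'} ∈ M(F,m,n) (u,u' ∈ {1,…,s}, v,v' ∈ {1,…,t}) be matrices satisfying Q_{u,v,u',v'} ∘ A = δ_{u,u'}·δ_{v,v'} (a scalar, via the partial Frobenius product with s=t=1). Then for every B ∈ M(F,s,t): Σ_{u,u'=1}^{s} Σ_{v,v'=1}^{t} e_{u',s} e_{u,s}^T (Q_{u,v,u',v'} ∘ (A⊗B)) e_{v,t} e_{v',t}^T = B, where e_{i,m} denotes the i-th standard basis column vector of F^m. -/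

import Mathlib

/-!
Theorem: let `A ∈ M(F,m,n)` and let `Q u v u' v' ∈ M(F,m,n)` satisfy
`Q u v u' v' ∘ A = δ_{u,u'} δ_{v,v'}` (a scalar, partial Frobenius product with
`s = t = 1`).  Then for every `B ∈ M(F,s,t)`:
`∑_{u,u',v,v'} e_{u'} e_uᵀ (Q u v u' v' ∘ (A ⊗ B)) e_v e_{v'}ᵀ = B`.
-/

open Matrix
open scoped Kronecker

/-- The partial Frobenius product `A ∘ M`:
`(A ∘ M)_{u,v} = ∑_{j,k} A_{j,k} M_{(j,u),(k,v)}`. -/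
def pfrob {F : Type*} [Field F] {I J S T : Type*} [Fintype I] [Fintype J]
    (A : Matrix I J F) (M : Matrix (I × S) (J × T) F) : Matrix S T F :=
  Matrix.of fun u v => ∑ j, ∑ k, A j k * M (j, u) (k, v)

/-- The scalar (`s = t = 1`) partial Frobenius product. -/
def pfrobS {F : Type*} [Field F] {I J : Type*} [Fintype I] [Fintype J]
    (A M : Matrix I J F) : F := ∑ j, ∑ k, A j k * M j k

lemma pfrob_kronecker {F : Type*} [Field F] {I J S T : Type*} [Fintype I] [Fintype J]
    (P A : Matrix I J F) (B : Matrix S T F) :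
    pfrob P (A ⊗ₖ B) = pfrobS P A • B := by
  ext u v
  simp only [pfrob, pfrobS, of_apply, kroneckerMap_apply, Matrix.smul_apply, smul_eq_mul,
    Finset.sum_mul, mul_assoc]

theorem decomposition_recovers_kronecker_factor
    {F : Type*} [Field F] {m n s t : ℕ}
    (A : Matrix (Fin m) (Fin n) F)
    (Q : Fin s → Fin t → Fin s → Fin t → Matrix (Fin m) (Fin n) F)
    (hQ : ∀ (u u' : Fin s) (v v' : Fin t),
      pfrobS (Q u v u' v') A = if u = u' ∧ v = v' then (1 : F) else 0)
    (B : Matrix (Fin s) (Fin t) F) :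
    ∑ u : Fin s, ∑ u' : Fin s, ∑ v : Fin t, ∑ v' : Fin t,
      Matrix.single u' u (1 : F) * pfrob (Q u v u' v') (A ⊗ₖ B) *
        Matrix.single v v' (1 : F) = B := by
  calc _ = ∑ u : Fin s, ∑ v : Fin t, single u u (1 : F) * B * single v v (1 : F) := by
        simp only [pfrob_kronecker, Matrix.mul_smul, Matrix.smul_mul, hQ]
        simp only [ite_and, ite_smul, one_smul, zero_smul, Finset.sum_ite_irrel,
          Finset.sum_const_zero, Finset.sum_ite_eq, Finset.mem_univ, if_true]
    _ = (∑ u : Fin s, single u u (1 : F)) * B * ∑ v : Fin t, single v v (1 : F) := by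
        rw [Finset.sum_comm]
        simp only [Matrix.sum_mul, Matrix.mul_sum]
    _ = B := by rw [sum_single_one, sum_single_one, Matrix.one_mul, Matrix.mul_one]
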